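/- The scaled Neumann stiffness and mass matrices are diagonalized by the DCT-I matrix: M̄ Ā M̄ C̄ = C̄ Λ̄² and M̄ D̄ M̄ C̄ = C̄ Σ̄; equivalently, C̄⁻¹ M̄ Ā M̄ C̄ = Λ̄² and C̄⁻¹ M̄ D̄ M̄ C̄ = Σ̄. -/

import Mathlib

open Matrix Real

/-- `τ_i = -2 sin(iπ/(2n))`. -/
noncomputable def tau (n i : ℕ) : ℝ := -2 * Real.sin ((i : ℝ) * Real.pi / (2 * n))

/-- `σ_i = 2(2 + cos(iπ/n))`. -/
noncomputable def sigma (n i : ℕ) : ℝ := 2 * (2 + Real.cos ((i : ℝ) * Real.pi / n))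

/-- `ν_j = 1` for `1 ≤ j ≤ n-1` and `ν_0 = ν_n = 1/√2`. -/
noncomputable def nubar (n j : ℕ) : ℝ := if j = 0 ∨ j = n then 1 / Real.sqrt 2 else 1

/-- The Neumann stiffness matrix `Ā ∈ ℝ^{(n+1)×(n+1)}`: tridiagonal with diagonal
`(1, 2, …, 2, 1)` and `-1` on the first sub- and super-diagonals. -/
def Abar (n : ℕ) : Matrix (Fin (n + 1)) (Fin (n + 1)) ℝ :=
  Matrix.of fun k l =>
    if (k : ℕ) = (l : ℕ) then (if (k : ℕ) = 0 ∨ (k : ℕ) = n then 1 else 2)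
    else if (k : ℕ) + 1 = (l : ℕ) ∨ (l : ℕ) + 1 = (k : ℕ) then -1 else 0

/-- The Neumann mass matrix `D̄ ∈ ℝ^{(n+1)×(n+1)}`: tridiagonal with diagonal
`(2, 4, …, 4, 2)` and `1` on the first sub- and super-diagonals. -/
def Dbar (n : ℕ) : Matrix (Fin (n + 1)) (Fin (n + 1)) ℝ :=
  Matrix.of fun k l =>
    if (k : ℕ) = (l : ℕ) then (if (k : ℕ) = 0 ∨ (k : ℕ) = n then 2 else 4)
    else if (k : ℕ) + 1 = (l : ℕ) ∨ (l : ℕ) + 1 = (k : ℕ) then 1 else 0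

/-- The DCT-I matrix `C̄` with `C̄_{kj} = ν_k ν_j cos(kjπ/n)`. -/
noncomputable def Cbar (n : ℕ) : Matrix (Fin (n + 1)) (Fin (n + 1)) ℝ :=
  Matrix.of fun k j =>
    nubar n (k : ℕ) * nubar n (j : ℕ) * Real.cos (((k : ℕ) * (j : ℕ) : ℕ) * Real.pi / n)

/-- `M̄ = diag(√2, 1, …, 1, √2)`. -/
noncomputable def Mbar (n : ℕ) : Matrix (Fin (n + 1)) (Fin (n + 1)) ℝ :=
  Matrix.diagonal fun k => if (k : ℕ) = 0 ∨ (k : ℕ) = n then Real.sqrt 2 else 1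

/-- `Λ̄ = diag(τ_0, …, τ_n)`. -/
noncomputable def Lambar (n : ℕ) : Matrix (Fin (n + 1)) (Fin (n + 1)) ℝ :=
  Matrix.diagonal fun k => tau n (k : ℕ)

/-- `Σ̄ = diag(σ_0, …, σ_n)`. -/
noncomputable def Sigbar (n : ℕ) : Matrix (Fin (n + 1)) (Fin (n + 1)) ℝ :=
  Matrix.diagonal fun k => sigma n (k : ℕ)

section AuxStmt16
open Finset

lemma sqrt2_sq : Real.sqrt 2 * Real.sqrt 2 = 2 := Real.mul_self_sqrt (by norm_num)
lemma sqrt2_ne : Real.sqrt 2 ≠ 0 := by positivity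

lemma mfnu (n l : ℕ) :
    (if l = 0 ∨ l = n then Real.sqrt 2 else 1) * nubar n l = 1 := by
  unfold nubar; split
  · rw [mul_one_div, div_self sqrt2_ne]
  · ring

lemma sum_range_eq_Ico {N a b : ℕ} (f : ℕ → ℝ) (hab : a ≤ b) (hb : b ≤ N)
    (h0 : ∀ l, l < a → f l = 0) (h1 : ∀ l, b ≤ l → l < N → f l = 0) :
    ∑ l ∈ Finset.range N, f l = ∑ l ∈ Finset.Ico a b, f l := by
  rw [Finset.range_eq_Ico, ← Finset.sum_Ico_consecutive f (Nat.zero_le b) hb,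
      ← Finset.sum_Ico_consecutive f (Nat.zero_le a) hab,
      Finset.sum_eq_zero (fun l hl => h0 l (Finset.mem_Ico.mp hl).2),
      Finset.sum_eq_zero (fun l hl => h1 l (Finset.mem_Ico.mp hl).1 (Finset.mem_Ico.mp hl).2),
      zero_add, add_zero]

lemma key (n : ℕ) (hn : 2 ≤ n) (d e : ℝ)
    (T : Matrix (Fin (n+1)) (Fin (n+1)) ℝ)
    (hT : ∀ k l : Fin (n+1), T k l =
      if (k:ℕ) = (l:ℕ) then (if (k:ℕ) = 0 ∨ (k:ℕ) = n then d/2 else d)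
      else if (k:ℕ)+1 = (l:ℕ) ∨ (l:ℕ)+1 = (k:ℕ) then e else 0) :
    Mbar n * T * Mbar n * Cbar n =
      Cbar n * Matrix.diagonal (fun j : Fin (n+1) => d + 2*e*Real.cos ((j:ℕ) * π / n)) := by
  have hn0 : (n:ℝ) ≠ 0 := Nat.cast_ne_zero.mpr (by omega)
  ext k j
  have hkle : (k:ℕ) ≤ n := Fin.is_le k
  set kk := (k:ℕ) with hkk
  set jj := (j:ℕ) with hjj
  set F : ℕ → ℝ := fun l =>
    (if kk = 0 ∨ kk = n then Real.sqrt 2 else 1) *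
    (if kk = l then (if kk = 0 ∨ kk = n then d/2 else d)
      else if kk + 1 = l ∨ l + 1 = kk then e else 0) *
    ((if l = 0 ∨ l = n then Real.sqrt 2 else 1) *
    (nubar n l * nubar n jj * Real.cos (((l * jj : ℕ):ℝ) * π / n))) with hF
  have hLHS : (Mbar n * T * Mbar n * Cbar n) k j = ∑ l ∈ Finset.range (n+1), F l := by
    rw [← Fin.sum_univ_eq_sum_range F (n+1), Matrix.mul_apply]
    apply Finset.sum_congr rfl
    intro l _
    simp only [Mbar, Matrix.mul_diagonal, Matrix.diagonal_mul, Cbar, Matrix.of_apply, hT, hF]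
    ring
  have hRHS : (Cbar n * Matrix.diagonal (fun j : Fin (n+1) => d + 2*e*Real.cos ((j:ℕ) * π / n))) k j
      = nubar n kk * nubar n jj * Real.cos (((kk * jj : ℕ):ℝ) * π / n) * (d + 2*e*Real.cos (jj * π / n)) := by
    rw [Matrix.mul_diagonal]
    simp only [Cbar, Matrix.of_apply]
    rfl
  rw [hLHS, hRHS]
  by_cases hk0 : kk = 0
  · have hz1 : ∀ l, 2 ≤ l → l < n + 1 → F l = 0 := by
      intro l hl _
      have h1 : ¬ (kk = l) := by omega
      have h2 : ¬ (kk + 1 = l ∨ l + 1 = kk) := by omega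
      rw [hF]
      simp only [if_neg h1, if_neg h2]
      ring
    rw [sum_range_eq_Ico F (by omega : 0 ≤ 2) (by omega : 2 ≤ n+1) (by omega) hz1]
    rw [Nat.Ico_zero_eq_range, Finset.sum_range_succ, Finset.sum_range_one]
    have h1n : ¬((1:ℕ) = 0 ∨ 1 = n) := by omega
    have hnu0 : nubar n 0 = 1/Real.sqrt 2 := by rw [nubar, if_pos (Or.inl rfl)]
    have hnu1 : nubar n 1 = 1 := by rw [nubar, if_neg h1n]
    have hinv : (Real.sqrt 2)⁻¹ = Real.sqrt 2 / 2 := by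
      field_simp
      rw [Real.sq_sqrt (by norm_num : (0:ℝ) ≤ 2)]
    simp only [hF, hk0]
    norm_num [hnu0, hnu1, h1n, show (1:ℕ) ≠ n from by omega]
    simp only [hinv]
    ring
  · by_cases hkn : kk = n
    · have hz0 : ∀ l, l < n - 1 → F l = 0 := by
        intro l hl
        have h1 : ¬ (kk = l) := by omega
        have h2 : ¬ (kk + 1 = l ∨ l + 1 = kk) := by omega
        rw [hF]
        simp only [if_neg h1, if_neg h2]
        ring
      rw [sum_range_eq_Ico F (by omega : n-1 ≤ n+1) (le_refl (n+1)) hz0 (by omega)]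
      rw [show Finset.Ico (n-1) (n+1) = Finset.Ico (n-1) ((n-1) + 1 + 1) from by congr 1; omega,
        Finset.sum_Ico_succ_top (by omega), Finset.sum_Ico_succ_top (by omega),
        Finset.Ico_self, Finset.sum_empty, zero_add,
        show n - 1 + 1 = n by omega]
      have en1 : ¬ (n - 1 = 0 ∨ n - 1 = n) := by omega
      have hnun : nubar n n = 1/Real.sqrt 2 := by rw [nubar, if_pos (Or.inr rfl)]
      have hnun1 : nubar n (n-1) = 1 := by rw [nubar, if_neg en1]
      have hinv : (Real.sqrt 2)⁻¹ = Real.sqrt 2 / 2 := by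
        field_simp
        rw [Real.sq_sqrt (by norm_num : (0:ℝ) ≤ 2)]
      have cn : Real.cos (((n * jj : ℕ):ℝ) * π / n) = Real.cos ((jj:ℝ) * π) := by
        congr 1; push_cast; field_simp
      have cn1 : Real.cos ((((n-1) * jj : ℕ):ℝ) * π / n)
          = Real.cos ((jj:ℝ) * π) * Real.cos ((jj:ℝ) * π / n) := by
        have harg : ((((n-1) * jj : ℕ)):ℝ) * π / n = (jj:ℝ) * π - (jj:ℝ) * π / n := by
          push_cast [Nat.cast_sub (by omega : 1 ≤ n)]
          field_simp
        rw [harg, Real.cos_sub, Real.sin_nat_mul_pi]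
        ring
      simp only [hF, hkn]
      rw [cn, cn1]
      norm_num [hnun, hnun1, en1, show ¬(n = n-1) from by omega, show n-1+1 = n from by omega]
      simp only [hinv]
      linear_combination (d * nubar n jj * Real.cos ((jj:ℝ) * π) * Real.sqrt 2 / 4) * sqrt2_sq
    · -- interior
      have hk1 : 1 ≤ kk := by omega
      have hz0 : ∀ l, l < kk - 1 → F l = 0 := by
        intro l hl
        have h1 : ¬ (kk = l) := by omega
        have h2 : ¬ (kk + 1 = l ∨ l + 1 = kk) := by omega
        rw [hF]; simp only [if_neg h1, if_neg h2]; ring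
      have hz1 : ∀ l, kk + 2 ≤ l → l < n + 1 → F l = 0 := by
        intro l hl _
        have h1 : ¬ (kk = l) := by omega
        have h2 : ¬ (kk + 1 = l ∨ l + 1 = kk) := by omega
        rw [hF]; simp only [if_neg h1, if_neg h2]; ring
      rw [sum_range_eq_Ico F (by omega : kk-1 ≤ kk+2) (by omega : kk+2 ≤ n+1) hz0 hz1]
      rw [show Finset.Ico (kk-1) (kk+2) = Finset.Ico (kk-1) ((kk-1)+1+1+1) from by congr 1; omega,
        Finset.sum_Ico_succ_top (by omega), Finset.sum_Ico_succ_top (by omega),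
        Finset.sum_Ico_succ_top (by omega), Finset.Ico_self, Finset.sum_empty, zero_add,
        show kk - 1 + 1 = kk by omega, show kk - 1 + 1 + 1 = kk + 1 by omega]
      rw [hF]
      have hke : ¬ (kk = 0 ∨ kk = n) := by omega
      have hdm : ¬ (kk = kk - 1) := by omega
      have hdp : ¬ (kk = kk + 1) := by omega
      have hom : (kk + 1 = kk - 1 ∨ (kk - 1) + 1 = kk) := Or.inr (by omega)
      have hop : (kk + 1 = kk + 1 ∨ (kk + 1) + 1 = kk) := Or.inl rfl
      simp only [if_neg hke, if_neg hdm, if_neg hdp, if_pos hom, if_pos hop, if_pos rfl, true_or, or_true, if_true, eq_self_iff_true]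
      have hmv1 := mfnu n (kk - 1)
      have hmv2 := mfnu n (kk + 1)
      have cm : Real.cos ((((kk-1) * jj : ℕ):ℝ) * π / n)
          = Real.cos ((((kk * jj:ℕ)):ℝ) * π / n) * Real.cos (jj * π / n)
            + Real.sin ((((kk * jj:ℕ)):ℝ) * π / n) * Real.sin (jj * π / n) := by
        have harg : ((((kk-1) * jj : ℕ)):ℝ) * π / n = (((kk * jj:ℕ)):ℝ) * π / n - jj * π / n := by
          push_cast [Nat.cast_sub hk1]
          field_simp
        rw [harg, Real.cos_sub]
      have cp : Real.cos ((((kk+1) * jj : ℕ):ℝ) * π / n)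
          = Real.cos ((((kk * jj:ℕ)):ℝ) * π / n) * Real.cos (jj * π / n)
            - Real.sin ((((kk * jj:ℕ)):ℝ) * π / n) * Real.sin (jj * π / n) := by
        have harg : ((((kk+1) * jj : ℕ)):ℝ) * π / n = (((kk * jj:ℕ)):ℝ) * π / n + jj * π / n := by
          push_cast
          field_simp
        rw [harg, Real.cos_add]
      rw [cm, cp]
      rw [show nubar n kk = 1 from by rw [nubar, if_neg hke]]
      set ν := nubar n jj
      set s1 := (if kk - 1 = 0 ∨ kk - 1 = n then Real.sqrt 2 else 1) with hs1
      set s2 := (if kk + 1 = 0 ∨ kk + 1 = n then Real.sqrt 2 else 1) with hs2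
      have hmv1' : s1 * nubar n (kk-1) = 1 := mfnu n (kk-1)
      have hmv2' : s2 * nubar n (kk+1) = 1 := mfnu n (kk+1)
      set cc := Real.cos ((((kk * jj:ℕ)):ℝ) * π / n)
      set ss := Real.sin ((((kk * jj:ℕ)):ℝ) * π / n)
      set c := Real.cos (jj * π / n)
      set s := Real.sin (jj * π / n)
      linear_combination (e * ν * (cc * c + ss * s)) * hmv1' + (e * ν * (cc * c - ss * s)) * hmv2'

lemma nu_sq (n j : ℕ) : nubar n j * nubar n j = if j = 0 ∨ j = n then (1:ℝ)/2 else 1 := by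
  unfold nubar; split
  · rw [div_mul_div_comm, one_mul, sqrt2_sq]
  · ring

lemma cos_int_pi (m : ℤ) : Real.cos (m * π) = (-1)^m := by
  simpa using Real.cos_int_mul_pi_sub 0 m

lemma wsplit (n : ℕ) (hn : 0 < n) (g : ℕ → ℝ) :
    ∑ j ∈ range (n+1), (if j = 0 ∨ j = n then (1:ℝ)/2 else 1) * g j
      = (∑ j ∈ range (n+1), g j) - g 0 / 2 - g n / 2 := by
  have e : ∀ j ∈ range (n+1), (if j = 0 ∨ j = n then (1:ℝ)/2 else 1) * g j
      = g j - ((if j = 0 then g 0 / 2 else 0) + (if j = n then g n / 2 else 0)) := by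
    intro j _
    by_cases h0 : j = 0
    · subst h0
      have hne : (0:ℕ) ≠ n := fun h => hn.ne h
      simp [hne.symm, hne]
      ring
    · by_cases h1 : j = n
      · subst h1; simp [h0]; ring
      · simp [h0, h1]
  rw [Finset.sum_congr rfl e, Finset.sum_sub_distrib, Finset.sum_add_distrib,
      Finset.sum_ite_eq' (range (n+1)) 0, Finset.sum_ite_eq' (range (n+1)) n]
  have h0m : (0:ℕ) ∈ range (n+1) := by simp
  have hnm : n ∈ range (n+1) := by simp
  rw [if_pos h0m, if_pos hnm]
  ring

lemma Gsum (n : ℕ) (hn : 0 < n) (m : ℤ) :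
    ∑ j ∈ range (n+1), (if j = 0 ∨ j = n then (1:ℝ)/2 else 1) * Real.cos (m * j * π / n)
      = if (2*(n:ℤ)) ∣ m then (n:ℝ) else 0 := by
  have hπ := Real.pi_ne_zero
  have hn0 : (n:ℝ) ≠ 0 := Nat.cast_ne_zero.mpr hn.ne'
  rw [wsplit n hn]
  by_cases hd : (2*(n:ℤ)) ∣ m
  · obtain ⟨c, hc⟩ := hd
    have hterm : ∀ j ∈ range (n+1), Real.cos ((m:ℝ) * j * π / n) = 1 := by
      intro j _
      have harg : (m:ℝ) * j * π / n = ((c*j : ℤ) : ℝ) * (2*π) := by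
        subst hc; push_cast; field_simp
      rw [harg, Real.cos_int_mul_two_pi]
    rw [Finset.sum_congr rfl hterm, if_pos ⟨c, hc⟩,
        hterm 0 (by simp), hterm n (by simp), Finset.sum_const, Finset.card_range]
    push_cast
    ring
  · -- r = exp(θ I)
    set θ : ℝ := (m:ℝ) * π / n with hθ
    set r : ℂ := Complex.exp (θ * Complex.I) with hr
    have hr0 : r ≠ 0 := Complex.exp_ne_zero _
    have hnc : (n:ℂ) ≠ 0 := Nat.cast_ne_zero.mpr hn.ne'
    have hr1 : r ≠ 1 := by
      intro heq
      rw [hr, Complex.exp_eq_one_iff] at heq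
      obtain ⟨k, hk⟩ := heq
      have h2 : (θ:ℂ) * Complex.I = ((k:ℂ) * (2*(π:ℂ))) * Complex.I := by rw [hk]; ring
      have h3 : (θ:ℂ) = (k:ℂ) * (2*(π:ℂ)) := mul_right_cancel₀ Complex.I_ne_zero h2
      have h4 : θ = (k:ℝ) * (2*π) := by exact_mod_cast h3
      apply hd
      refine ⟨k, ?_⟩
      have h5 : (m:ℝ) = ((2*(n:ℤ)*k : ℤ) : ℝ) := by
        rw [hθ] at h4
        field_simp at h4
        push_cast
        nlinarith [h4, Real.pi_pos]
      exact_mod_cast h5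
    set ε : ℂ := ((-1:ℂ))^m with hε
    have hrn : r ^ n = ε := by
      rw [hr, ← Complex.exp_nat_mul]
      have harg : (n:ℂ) * ((θ:ℂ) * Complex.I) = (m:ℂ) * ((π:ℂ) * Complex.I) := by
        rw [hθ]; push_cast; field_simp
      rw [harg, Complex.exp_int_mul, Complex.exp_pi_mul_I]
    have hεsq : ε * ε = 1 := by
      rw [hε, ← zpow_add₀ (by norm_num : (-1:ℂ) ≠ 0)]
      rw [show m + m = 2*m by ring, _root_.zpow_mul]
      norm_num
    have hrninv : (r⁻¹) ^ n = ε := by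
      rw [inv_pow, hrn, inv_eq_of_mul_eq_one_right hεsq]
    have hA : (∑ j ∈ range (n+1), r^j) * (r - 1) = ε * r - 1 := by
      rw [geom_sum_mul, pow_succ, hrn]
    have hBpre : (∑ j ∈ range (n+1), (r⁻¹)^j) * (r⁻¹ - 1) = ε * r⁻¹ - 1 := by
      rw [geom_sum_mul, pow_succ, hrninv]
    have hB : (∑ j ∈ range (n+1), (r⁻¹)^j) * (r - 1) = r - ε := by
      have h1 : r - 1 = -r * (r⁻¹ - 1) := by field_simp; ring
      rw [h1, show (∑ j ∈ range (n+1), (r⁻¹)^j) * (-r * (r⁻¹ - 1)) =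
        -r * ((∑ j ∈ range (n+1), (r⁻¹)^j) * (r⁻¹ - 1)) by ring, hBpre]
      field_simp
      ring
    have hrm1 : r - 1 ≠ 0 := sub_ne_zero.mpr hr1
    have hsum : (∑ j ∈ range (n+1), r^j) + (∑ j ∈ range (n+1), (r⁻¹)^j) = 1 + ε := by
      have key : ((∑ j ∈ range (n+1), r^j) + (∑ j ∈ range (n+1), (r⁻¹)^j) - (1 + ε)) * (r - 1) = 0 := by
        linear_combination hA + hB
      rcases mul_eq_zero.mp key with h | h
      · exact sub_eq_zero.mp h
      · exact absurd h hrm1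
    have hterm2 : ∀ j : ℕ, ((Real.cos ((m:ℝ) * j * π / n) : ℝ) : ℂ) = (r^j + (r⁻¹)^j)/2 := by
      intro j
      have harg : ((((m:ℝ) * j * π / n : ℝ)) : ℂ) = (j:ℂ) * (θ:ℂ) := by
        push_cast [hθ]
        ring
      have e1 : r ^ j = Complex.exp ((((m:ℝ) * j * π / n : ℝ) : ℂ) * Complex.I) := by
        rw [hr, ← Complex.exp_nat_mul]
        congr 1
        rw [harg]; ring
      have e2 : (r⁻¹) ^ j = Complex.exp (-((((m:ℝ) * j * π / n : ℝ) : ℂ) * Complex.I)) := by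
        rw [hr, ← Complex.exp_neg, ← Complex.exp_nat_mul]
        congr 1
        rw [harg]; ring
      rw [Complex.ofReal_cos, e1, e2]
      have h2c := Complex.two_cos ((((m:ℝ) * j * π / n : ℝ)) : ℂ)
      rw [neg_mul] at h2c
      linear_combination h2c / 2
    have hcast : ((∑ j ∈ range (n+1), Real.cos ((m:ℝ)*(j:ℝ)*π/n) : ℝ) : ℂ) = (1+ε)/2 := by
      rw [Complex.ofReal_sum, Finset.sum_congr rfl (fun j _ => hterm2 j),
        ← Finset.sum_div, Finset.sum_add_distrib, hsum]
    have hre : ∑ j ∈ range (n+1), Real.cos ((m:ℝ)*(j:ℝ)*π/n) = (1 + (-1:ℝ)^m)/2 := by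
      have hεr : (((1 + (-1:ℝ)^m)/2 : ℝ) : ℂ) = (1+ε)/2 := by rw [hε]; push_cast; ring
      exact_mod_cast hcast.trans hεr.symm
    rw [if_neg hd, hre]
    have hg0 : Real.cos ((m:ℝ) * ((0:ℕ):ℝ) * π / n) = 1 := by norm_num
    have hgn : Real.cos ((m:ℝ) * ((n:ℕ):ℝ) * π / n) = (-1:ℝ)^m := by
      rw [show (m:ℝ) * (n:ℝ) * π / n = m * π by field_simp, cos_int_pi]
    rw [hg0, hgn]
    ring


lemma Cbar_mul_Cbar (n : ℕ) (hn : 2 ≤ n) :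
    Cbar n * Cbar n = ((n:ℝ)/2) • (1 : Matrix (Fin (n+1)) (Fin (n+1)) ℝ) := by
  have hnpos : 0 < n := by omega
  ext k l
  rw [Matrix.mul_apply]
  have hk : (k:ℕ) ≤ n := Fin.is_le k
  have hl : (l:ℕ) ≤ n := Fin.is_le l
  set a : ℤ := ((k:ℕ):ℤ) + ((l:ℕ):ℤ) with ha
  set b : ℤ := ((k:ℕ):ℤ) - ((l:ℕ):ℤ) with hb
  set G : ℕ → ℝ := fun j => nubar n (k:ℕ) * nubar n (l:ℕ) *
      (((if j = 0 ∨ j = n then (1:ℝ)/2 else 1) * Real.cos ((a:ℝ) * j * π / n)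
        + (if j = 0 ∨ j = n then (1:ℝ)/2 else 1) * Real.cos ((b:ℝ) * j * π / n))/2) with hG
  have hterm : ∀ jf : Fin (n+1), Cbar n k jf * Cbar n jf l = G (jf:ℕ) := by
    intro jf
    simp only [Cbar, Matrix.of_apply, hG]
    set c1 := Real.cos ((((k:ℕ) * (jf:ℕ) : ℕ):ℝ) * π / n) with hc1
    set c2 := Real.cos ((((jf:ℕ) * (l:ℕ) : ℕ):ℝ) * π / n) with hc2
    set w := (if (jf:ℕ) = 0 ∨ (jf:ℕ) = n then (1:ℝ)/2 else 1) with hw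
    have h2 := Real.two_mul_cos_mul_cos ((((k:ℕ) * (jf:ℕ) : ℕ):ℝ) * π / n)
      ((((jf:ℕ) * (l:ℕ) : ℕ):ℝ) * π / n)
    have e1 : (((k:ℕ) * (jf:ℕ) : ℕ):ℝ) * π / n - (((jf:ℕ) * (l:ℕ) : ℕ):ℝ) * π / n
        = (b:ℝ) * (jf:ℕ) * π / n := by rw [hb]; push_cast; ring
    have e2 : (((k:ℕ) * (jf:ℕ) : ℕ):ℝ) * π / n + (((jf:ℕ) * (l:ℕ) : ℕ):ℝ) * π / n
        = (a:ℝ) * (jf:ℕ) * π / n := by rw [ha]; push_cast; ring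
    rw [e1, e2, ← hc1, ← hc2] at h2
    have hν := nu_sq n (jf:ℕ)
    rw [← hw] at hν
    linear_combination (nubar n (k:ℕ) * nubar n (l:ℕ) * c1 * c2) * hν
      + (nubar n (k:ℕ) * nubar n (l:ℕ) * w / 2) * h2
  rw [Finset.sum_congr rfl (fun jf _ => hterm jf)]
  rw [show (∑ jf : Fin (n+1), G (jf:ℕ)) = ∑ j ∈ range (n+1), G j from
    Fin.sum_univ_eq_sum_range G (n+1)]
  have hGsum : ∑ j ∈ range (n+1), G j = nubar n (k:ℕ) * nubar n (l:ℕ) / 2 *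
      ((∑ j ∈ range (n+1), (if j = 0 ∨ j = n then (1:ℝ)/2 else 1) * Real.cos ((a:ℝ) * j * π / n))
       + ∑ j ∈ range (n+1), (if j = 0 ∨ j = n then (1:ℝ)/2 else 1) * Real.cos ((b:ℝ) * j * π / n)) := by
    rw [← Finset.sum_add_distrib, Finset.mul_sum]
    exact Finset.sum_congr rfl fun j _ => by rw [hG]; ring
  rw [hGsum, Gsum n hnpos a, Gsum n hnpos b]
  have hki : ((k:ℕ):ℤ) ≤ (n:ℤ) := by exact_mod_cast hk
  have hli : ((l:ℕ):ℤ) ≤ (n:ℤ) := by exact_mod_cast hl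
  have hni : (2:ℤ) ≤ (n:ℤ) := by exact_mod_cast hn
  by_cases hkl : k = l
  · subst hkl
    have hbd : (2*(n:ℤ)) ∣ b := by simp [hb]
    rw [if_pos hbd]
    by_cases hke : (k:ℕ) = 0 ∨ (k:ℕ) = n
    · have had : (2*(n:ℤ)) ∣ a := by
        rcases hke with h | h <;> · rw [ha, h]; push_cast; ring_nf; simp
      rw [if_pos had]
      rw [Matrix.smul_apply, Matrix.one_apply_eq, smul_eq_mul]
      rw [show nubar n (k:ℕ) = 1 / Real.sqrt 2 from by rw [nubar, if_pos hke]]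
      field_simp
      nlinarith [sqrt2_sq]
    · have had : ¬ (2*(n:ℤ)) ∣ a := by
        intro hdvd
        have h0a : 0 < a := by push_neg at hke; omega
        have := Int.le_of_dvd h0a hdvd
        push_neg at hke
        omega
      rw [if_neg had]
      rw [Matrix.smul_apply, Matrix.one_apply_eq, smul_eq_mul]
      rw [show nubar n (k:ℕ) = 1 from by rw [nubar, if_neg hke]]
      ring
  · have hne : (k:ℕ) ≠ (l:ℕ) := fun h => hkl (Fin.ext h)
    have hbd : ¬ (2*(n:ℤ)) ∣ b := by
      intro hdvd
      have hb0 : b = 0 := Int.eq_zero_of_abs_lt_dvd hdvd (by rw [abs_lt]; omega)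
      omega
    have had : ¬ (2*(n:ℤ)) ∣ a := by
      intro hdvd
      by_cases haz : a = 0
      · omega
      · have h0a : 0 < a := by omega
        have := Int.le_of_dvd h0a hdvd
        omega
    rw [if_neg hbd, if_neg had]
    rw [Matrix.smul_apply, Matrix.one_apply_ne hkl, smul_eq_mul]
    ring

lemma tau_sq (n j : ℕ) (hn : n ≠ 0) :
    tau n j * tau n j = 2 * (1 - Real.cos ((j:ℝ) * π / n)) := by
  have hn0 : (n:ℝ) ≠ 0 := Nat.cast_ne_zero.mpr hn
  have h2 : (j:ℝ) * π / n = 2 * ((j:ℝ) * π / (2*n)) := by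
    field_simp
  rw [tau, h2, Real.cos_two_mul']
  have hpc := Real.sin_sq_add_cos_sq ((j:ℝ) * π / (2*(n:ℝ)))
  linear_combination 2 * hpc


end AuxStmt16

/-- The scaled Neumann stiffness and mass matrices are diagonalized by the DCT-I
matrix: `M̄ Ā M̄ C̄ = C̄ Λ̄²`, `M̄ D̄ M̄ C̄ = C̄ Σ̄`; equivalently
`C̄⁻¹ M̄ Ā M̄ C̄ = Λ̄²` and `C̄⁻¹ M̄ D̄ M̄ C̄ = Σ̄`. -/
theorem stmt16 (n : ℕ) (hn : 2 ≤ n) :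
    Mbar n * Abar n * Mbar n * Cbar n = Cbar n * (Lambar n * Lambar n) ∧
    Mbar n * Dbar n * Mbar n * Cbar n = Cbar n * Sigbar n ∧
    (Cbar n)⁻¹ * (Mbar n * Abar n * Mbar n) * Cbar n = Lambar n * Lambar n ∧
    (Cbar n)⁻¹ * (Mbar n * Dbar n * Mbar n) * Cbar n = Sigbar n := by
  have hn0 : (n:ℝ) ≠ 0 := Nat.cast_ne_zero.mpr (by omega)
  have hA : Mbar n * Abar n * Mbar n * Cbar n = Cbar n * (Lambar n * Lambar n) := by
    have h := key n hn 2 (-1) (Abar n) (by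
      intro k l
      simp only [Abar, Matrix.of_apply]
      split_ifs <;> norm_num)
    rw [h]
    congr 1
    have hdiag1 : (fun j : Fin (n+1) => (2:ℝ) + 2*(-1)*Real.cos ((j:ℕ) * π / (n:ℝ)))
        = (fun i : Fin (n+1) => tau n (i:ℕ) * tau n (i:ℕ)) := by
      funext i
      rw [tau_sq n (i:ℕ) (by omega)]
      ring
    rw [hdiag1, Lambar, Matrix.diagonal_mul_diagonal]
  have hD : Mbar n * Dbar n * Mbar n * Cbar n = Cbar n * Sigbar n := by
    have h := key n hn 4 1 (Dbar n) (by
      intro k l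
      simp only [Dbar, Matrix.of_apply]
      split_ifs <;> norm_num)
    rw [h]
    congr 1
    have hdiag2 : (fun j : Fin (n+1) => (4:ℝ) + 2*1*Real.cos ((j:ℕ) * π / (n:ℝ)))
        = (fun i : Fin (n+1) => sigma n (i:ℕ)) := by
      funext i
      show _ = 2 * (2 + Real.cos ((i:ℕ) * π / (n:ℝ)))
      ring
    rw [hdiag2, Sigbar]
  have hCC := Cbar_mul_Cbar n hn
  have h1 : Cbar n * (((2:ℝ)/n) • Cbar n) = 1 := by
    rw [Matrix.mul_smul, hCC, smul_smul,
      show (2/(n:ℝ)) * ((n:ℝ)/2) = 1 by field_simp, one_smul]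
  have hinv : (Cbar n)⁻¹ * Cbar n = 1 := by
    rw [Matrix.inv_eq_right_inv h1, Matrix.smul_mul, hCC, smul_smul,
      show (2/(n:ℝ)) * ((n:ℝ)/2) = 1 by field_simp, one_smul]
  refine ⟨hA, hD, ?_, ?_⟩
  · rw [Matrix.mul_assoc, hA, ← Matrix.mul_assoc, hinv, Matrix.one_mul]
  · rw [Matrix.mul_assoc, hD, ← Matrix.mul_assoc, hinv, Matrix.one_mul]
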